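/- Let ∇ be a covariant derivative on the cotangent bundle of a smooth manifold (or abstractly, a connection on a finitely generated projective module), and let g be a nondegenerate (not necessarily symmetric) 2-tensor. Define the conjugate connection *∇ by g(*∇_X Y, Z) + g(Y, ∇_X Z) = X(g(Y,Z)). Then the difference of the antisymmetrized covariant derivatives of g equals cotorsion minus torsion: ∇_μ g_{νρ} − ∇_ν g_{μρ} = CoTorsion_{μνρ} − Torsion_{μνρ}, where the cotorsion is the torsion of *∇ (with indices lowered by g). In particular, if both the torsion of ∇ and the torsion of *∇ vanish, then ∇_μ g_{νρ} − ∇_ν g_{μρ} = 0. -/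

import Mathlib

/-! Compatibility rewrites the covariant derivative of `g` as `(∇_X g)(Y, Z) = g(*∇_X Y − ∇_X Y, Z)`,
so `∇ g` measures the difference tensor `*∇ − ∇`. Antisymmetrizing in `X, Y` turns that difference
into the difference of the torsions of `*∇` and `∇`, the bracket terms cancelling. -/

namespace ConjugateConnection

variable {A V : Type*} [CommRing A] [AddCommGroup V] [Module A V]

/-- `(∇_X g)(Y, Z)`, where `δ X` is the action of the vector field `X` on functions. -/
def covDeriv (g : V →ₗ[A] V →ₗ[A] A) (δ : V → A → A) (D : V → V → V) (X Y Z : V) : A :=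
  δ X (g Y Z) - g (D X Y) Z - g Y (D X Z)

def torsion (D : V → V → V) (bracket : V → V → V) (X Y : V) : V :=
  D X Y - D Y X - bracket X Y

variable {g : V →ₗ[A] V →ₗ[A] A} {δ : V → A → A} {D Dstar : V → V → V}

theorem covDeriv_eq_of_compat
    (hcompat : ∀ X Y Z : V, δ X (g Y Z) = g (Dstar X Y) Z + g Y (D X Z)) (X Y Z : V) :
    covDeriv g δ D X Y Z = g (Dstar X Y - D X Y) Z := by
  simp only [covDeriv, hcompat, map_sub, LinearMap.sub_apply]
  ring

theorem torsion_sub_torsion (bracket : V → V → V) (X Y : V) :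
    torsion Dstar bracket X Y - torsion D bracket X Y =
      (Dstar X Y - D X Y) - (Dstar Y X - D Y X) := by
  simp only [torsion]
  abel

theorem covDeriv_sub_covDeriv_eq_cotorsion_sub_torsion
    (hcompat : ∀ X Y Z : V, δ X (g Y Z) = g (Dstar X Y) Z + g Y (D X Z))
    (bracket : V → V → V) (X Y Z : V) :
    covDeriv g δ D X Y Z - covDeriv g δ D Y X Z =
      g (torsion Dstar bracket X Y) Z - g (torsion D bracket X Y) Z := by
  rw [covDeriv_eq_of_compat hcompat, covDeriv_eq_of_compat hcompat, ← LinearMap.sub_apply,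
    ← map_sub, ← LinearMap.sub_apply, ← map_sub, torsion_sub_torsion]

end ConjugateConnection

open ConjugateConnection in
theorem stmt18_general (A : Type*) [CommRing A] (V : Type*) [AddCommGroup V] [Module A V]
    (g : V →ₗ[A] V →ₗ[A] A)
    (bracket : V → V → V)
    (δ : V → A → A)
    (D Dstar : V → V → V)
    (hcompat : ∀ X Y Z : V, δ X (g Y Z) = g (Dstar X Y) Z + g Y (D X Z)) :
    (∀ X Y Z : V,
      (δ X (g Y Z) - g (D X Y) Z - g Y (D X Z))
        - (δ Y (g X Z) - g (D Y X) Z - g X (D Y Z))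
      = g (Dstar X Y - Dstar Y X - bracket X Y) Z
        - g (D X Y - D Y X - bracket X Y) Z) ∧
    ((∀ X Y : V, D X Y - D Y X - bracket X Y = 0) →
     (∀ X Y : V, Dstar X Y - Dstar Y X - bracket X Y = 0) →
     ∀ X Y Z : V,
       (δ X (g Y Z) - g (D X Y) Z - g Y (D X Z))
         - (δ Y (g X Z) - g (D Y X) Z - g X (D Y Z)) = 0) := by
  have key := covDeriv_sub_covDeriv_eq_cotorsion_sub_torsion hcompat bracket
  refine ⟨key, fun hTorsion hCotorsion X Y Z => ?_⟩
  refine (key X Y Z).trans ?_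
  rw [torsion, torsion, hTorsion, hCotorsion, sub_self]

/-- Abstract setting: vector fields `V` (a module over the algebra of functions `A`),
a nondegenerate (not necessarily symmetric) 2-tensor `g`, a Lie bracket and an action
`δ` of vector fields on functions, a connection `D = ∇` and the conjugate connection
`D* = *∇` determined by `X(g(Y,Z)) = g(*∇_X Y, Z) + g(Y, ∇_X Z)`.  Then the
antisymmetrized covariant derivative of `g` equals cotorsion minus torsion:
`∇_μ g_{νρ} − ∇_ν g_{μρ} = CoTorsion_{μνρ} − Torsion_{μνρ}`, where the cotorsion is
the (lowered) torsion of `*∇`.  In particular, if both torsions vanish, then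
`∇_μ g_{νρ} − ∇_ν g_{μρ} = 0`. -/
theorem stmt18 (A : Type*) [CommRing A] (V : Type*) [AddCommGroup V] [Module A V]
    (g : V →ₗ[A] V →ₗ[A] A)
    (hnd : ∀ v : V, (∀ w : V, g v w = 0) → v = 0)
    (bracket : V → V → V)
    (δ : V → A → A)
    (D Dstar : V → V → V)
    (hcompat : ∀ X Y Z : V, δ X (g Y Z) = g (Dstar X Y) Z + g Y (D X Z)) :
    (∀ X Y Z : V,
      (δ X (g Y Z) - g (D X Y) Z - g Y (D X Z))
        - (δ Y (g X Z) - g (D Y X) Z - g X (D Y Z))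
      = g (Dstar X Y - Dstar Y X - bracket X Y) Z
        - g (D X Y - D Y X - bracket X Y) Z) ∧
    ((∀ X Y : V, D X Y - D Y X - bracket X Y = 0) →
     (∀ X Y : V, Dstar X Y - Dstar Y X - bracket X Y = 0) →
     ∀ X Y Z : V,
       (δ X (g Y Z) - g (D X Y) Z - g Y (D X Z))
         - (δ Y (g X Z) - g (D Y X) Z - g X (D Y Z)) = 0) :=
  stmt18_general A V g bracket δ D Dstar hcompat
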